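/- For positive integers d, n with 2d < n, the number of permutations in S_n with pinnacle set M_d = {3, 5, 7, ..., 2d+1} equals 2^{n-d-1}. -/

import Mathlib

/-- `i` is a peak of the permutation `w` of `{1,…,n}` (represented on `Fin n`):
`0 < i < n-1` (0-indexed) and `w(i-1) < w(i) > w(i+1)`. -/
def IsPeak {n : ℕ} (w : Equiv.Perm (Fin n)) (i : Fin n) : Prop :=
  0 < i.val ∧ ∃ h : i.val + 1 < n,
    w ⟨i.val - 1, Nat.lt_of_le_of_lt (Nat.sub_le _ _) i.isLt⟩ < w i ∧
    w ⟨i.val + 1, h⟩ < w i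

/-- The pinnacle set of `w`, as a set of values in `{1,…,n}`. -/
def Pin {n : ℕ} (w : Equiv.Perm (Fin n)) : Set ℕ :=
  {v | ∃ i : Fin n, IsPeak w i ∧ v = (w i).val + 1}

/-- `p_S(n)`: the number of permutations in `S_n` with pinnacle set `S`. -/
noncomputable def pcount (n : ℕ) (S : Set ℕ) : ℕ :=
  Nat.card {w : Equiv.Perm (Fin n) // Pin w = S}

/-- `S` is an admissible pinnacle set. -/
def Admissible (S : Finset ℕ) : Prop :=
  ∃ (n : ℕ) (w : Equiv.Perm (Fin n)), Pin w = ↑S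

/-!
Pinnacles only depend on consecutive triples of entries, so we work with the one-line
notation as a list and describe pinnacles through its infixes `[a, b, c]`.

If `n > 2d + 1`, the largest entry `n` is not a pinnacle, so it sits at one of the two ends
of the list; deleting it gives a bijection onto `{0, 1} × {w ∈ S_{n-1} : Pin(w) = M_d}`.
If `n = 2d + 1` and `d ≥ 1`, the pinnacle `3` is flanked by `1` and `2`, in one of two
orders; collapsing this block to a single `1` and lowering all other entries by `2` gives a
bijection onto `{0, 1} × {w ∈ S_{2d-1} : Pin(w) = M_{d-1}}`.
Hence `p_{M_d}(n) = 2^{n-2d-1} · 2^d`.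
-/

namespace List

section Preorder

variable {α : Type*} [Preorder α]

def pinnacles (l : List α) : Set α :=
  {b | ∃ a c, [a, b, c] <:+: l ∧ a < b ∧ c < b}

theorem pinnacles_mono {l₁ l₂ : List α} (h : l₁ <:+: l₂) : l₁.pinnacles ⊆ l₂.pinnacles :=
  fun _ ⟨a, c, hi, ha, hc⟩ => ⟨a, c, hi.trans h, ha, hc⟩

theorem pinnacles_eq_empty_of_length_lt {l : List α} (h : l.length < 3) : l.pinnacles = ∅ :=
  Set.eq_empty_of_forall_notMem fun _ ⟨_, _, hi, _⟩ => by
    have := hi.length_le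
    simp only [length_cons, length_nil] at this
    omega

theorem exists_lt_of_mem_pinnacles {l : List α} {b : α} (h : b ∈ l.pinnacles) :
    ∃ a ∈ l, a < b :=
  let ⟨a, _, hi, ha, _⟩ := h
  ⟨a, hi.subset mem_cons_self, ha⟩

theorem pinnacles_reverse (l : List α) : l.reverse.pinnacles = l.pinnacles := by
  ext b
  constructor <;> rintro ⟨a, c, hi, ha, hc⟩ <;> refine ⟨c, a, ?_, hc, ha⟩
  · simpa using reverse_infix.2 hi
  · simpa using reverse_infix.2 hi

theorem pinnacles_cons_cons_cons (a b c : α) (l : List α) :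
    (a :: b :: c :: l).pinnacles = {x | x = b ∧ a < b ∧ c < b} ∪ (b :: c :: l).pinnacles := by
  ext x
  simp only [pinnacles, infix_cons_iff (l₂ := b :: c :: l), Set.mem_ofPred_eq, Set.mem_union]
  constructor
  · rintro ⟨a', c', hi | hi, ha, hc⟩
    · simp only [cons_prefix_cons, nil_prefix, and_true] at hi
      obtain ⟨rfl, rfl, rfl⟩ := hi
      exact Or.inl ⟨rfl, ha, hc⟩
    · exact Or.inr ⟨a', c', hi, ha, hc⟩
  · rintro (⟨rfl, ha, hc⟩ | ⟨a', c', hi, ha, hc⟩)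
    · exact ⟨a, c, Or.inl (by simp), ha, hc⟩
    · exact ⟨a', c', Or.inr hi, ha, hc⟩

theorem pinnacles_cons_of_head?_le {a : α} {l : List α} (h : ∀ b ∈ l.head?, b ≤ a) :
    (a :: l).pinnacles = l.pinnacles := by
  match l, h with
  | [], _ | [_], _ => simp [pinnacles_eq_empty_of_length_lt]
  | b :: c :: l, h =>
    rw [pinnacles_cons_cons_cons, Set.union_eq_right.2]
    rintro x ⟨rfl, hab, -⟩
    exact absurd (h x rfl) hab.not_ge

theorem pinnacles_cons_congr {a a' : α} {l : List α} (h : ∀ b ∈ l.head?, a < b ↔ a' < b) :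
    (a :: l).pinnacles = (a' :: l).pinnacles := by
  match l, h with
  | [], _ | [_], _ => simp [pinnacles_eq_empty_of_length_lt]
  | b :: c :: l, h => simp [pinnacles_cons_cons_cons, h b rfl]

theorem pinnacles_concat_of_getLast?_le {a : α} {l : List α} (h : ∀ b ∈ l.getLast?, b ≤ a) :
    (l ++ [a]).pinnacles = l.pinnacles := by
  rw [← pinnacles_reverse, reverse_concat, pinnacles_cons_of_head?_le (by simpa using h),
    pinnacles_reverse]

theorem pinnacles_concat_congr {a a' : α} {l : List α} (h : ∀ b ∈ l.getLast?, a < b ↔ a' < b) :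
    (l ++ [a]).pinnacles = (l ++ [a']).pinnacles := by
  rw [← pinnacles_reverse, reverse_concat, pinnacles_cons_congr (by simpa using h),
    ← reverse_concat, pinnacles_reverse]

theorem pinnacles_append_cons {s t : List α} {v : α} (h : ∀ a ∈ s.getLast?, v ≤ a) :
    (s ++ v :: t).pinnacles = (s ++ [v]).pinnacles ∪ (v :: t).pinnacles := by
  refine subset_antisymm ?_
    (Set.union_subset (pinnacles_mono ⟨[], t, by simp⟩) (pinnacles_mono (infix_append_right)))
  rintro b ⟨a, c, hi, ha, hc⟩
  rcases infix_append_iff.1 hi with hi | hi | ⟨l₁, l₂, he, hs, ht⟩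
  · exact Or.inl ⟨a, c, infix_append_of_infix_left hi, ha, hc⟩
  · exact Or.inr ⟨a, c, hi, ha, hc⟩
  match l₁, l₂, he with
  | [], _, rfl => exact Or.inr ⟨a, c, ht.isInfix, ha, hc⟩
  | [_], [_, _], he =>
    simp only [cons_append, nil_append, cons.injEq, and_true] at he
    obtain ⟨rfl, rfl, rfl⟩ := he
    obtain ⟨rfl, -⟩ := cons_prefix_cons.1 ht
    exact absurd (h a (singleton_suffix_iff_getLast?_eq_some.1 hs)) ha.not_ge
  | [_, _], [_], he =>
    simp only [cons_append, nil_append, cons.injEq, and_true] at he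
    obtain ⟨rfl, rfl, rfl⟩ := he
    obtain ⟨rfl, -⟩ := cons_prefix_cons.1 ht
    obtain ⟨u, rfl⟩ := hs
    exact Or.inl ⟨a, c, ⟨u, [], by simp⟩, ha, hc⟩
  | [_, _, _], [], he =>
    simp only [cons_append, nil_append, cons.injEq, and_true] at he
    obtain ⟨rfl, rfl, rfl⟩ := he
    exact Or.inl ⟨a, c, infix_append_of_infix_left hs.isInfix, ha, hc⟩

theorem pinnacles_append_cons_cons_cons {p q : List α} {x v y : α} (hx : x < v) (hy : y < v)
    (hp : ∀ a ∈ p.getLast?, v < a) (hq : ∀ c ∈ q.head?, v < c) :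
    (p ++ x :: v :: y :: q).pinnacles = insert v (p ++ v :: q).pinnacles := by
  rw [pinnacles_append_cons fun a ha => (hx.trans (hp a ha)).le,
    pinnacles_append_cons fun a ha => (hp a ha).le,
    pinnacles_concat_congr (a' := v) fun a ha => iff_of_true (hx.trans (hp a ha)) (hp a ha),
    pinnacles_cons_cons_cons, pinnacles_cons_of_head?_le (by simpa using hy.le),
    pinnacles_cons_congr (a' := v) fun c hc => iff_of_true (hy.trans (hq c hc)) (hq c hc)]
  ext b
  simp [hx, hy]

theorem pinnacles_cond_cons_concat {K : α} {l : List α}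
    (h : ∀ a ∈ l, a ≤ K) (b : Bool) : (cond b (K :: l) (l ++ [K])).pinnacles = l.pinnacles := by
  cases b
  · exact pinnacles_concat_of_getLast?_le fun a ha => h a (mem_of_getLast? ha)
  · exact pinnacles_cons_of_head?_le fun a ha => h a (mem_of_mem_head? ha)

theorem mem_pinnacles_iff_getElem {l : List α} {b : α} :
    b ∈ l.pinnacles ↔
      ∃ i, ∃ h : i + 2 < l.length, l[i] < l[i + 1] ∧ l[i + 2] < l[i + 1] ∧ b = l[i + 1] := by
  constructor
  · rintro ⟨a, c, ⟨s, t, rfl⟩, ha, hc⟩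
    refine ⟨s.length, by simp, ?_⟩
    simp [getElem_append_right, ha, hc]
  · rintro ⟨i, h, ha, hc, rfl⟩
    refine ⟨l[i], l[i + 2], infix_iff_getElem?.2 ⟨i, by simp; omega, fun j hj => ?_⟩, ha, hc⟩
    simp only [length_cons, length_nil] at hj
    interval_cases j <;> simp [Nat.add_comm]

end Preorder

theorem pinnacles_map_of_strictMono {α β : Type*} [LinearOrder α] [Preorder β] {f : α → β}
    (hf : StrictMono f) (l : List α) : (l.map f).pinnacles = f '' l.pinnacles := by
  ext b
  constructor
  · rintro ⟨a, c, hi, ha, hc⟩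
    obtain ⟨l', hl', he⟩ := infix_map_iff.1 hi
    match l', he with
    | [a', b', c'], he =>
      simp only [map_cons, map_nil, cons.injEq, and_true] at he
      obtain ⟨rfl, rfl, rfl⟩ := he
      exact ⟨b', ⟨a', c', hl', hf.lt_iff_lt.1 ha, hf.lt_iff_lt.1 hc⟩, rfl⟩
  · rintro ⟨b', ⟨a', c', hi, ha, hc⟩, rfl⟩
    exact ⟨f a', f c', by simpa using hi.map f, hf ha, hf hc⟩

theorem cond_cons_concat_inj {α : Type*} {K : α} {l l' : List α} {b b' : Bool}
    (hl : l ≠ []) (hl' : l' ≠ []) (hK : K ∉ l) (hK' : K ∉ l')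
    (h : cond b (K :: l) (l ++ [K]) = cond b' (K :: l') (l' ++ [K])) : b = b' ∧ l = l' := by
  have cross {l l' : List α} (hl : l ≠ []) (hK : K ∉ l) : l ++ [K] ≠ K :: l' := by
    obtain ⟨a, l, rfl⟩ := exists_cons_of_ne_nil hl
    rintro ⟨rfl, -⟩
    exact hK mem_cons_self
  cases b <;> cases b' <;>
    simp only [cond_false, cond_true, append_left_inj, cons.injEq, true_and] at h
  · exact ⟨rfl, h⟩
  · exact absurd h (cross hl hK)
  · exact absurd h.symm (cross hl' hK')
  · exact ⟨rfl, h⟩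

end List

theorem le_and_lt_of_mem_of_perm_range' {n a : ℕ} {l : List ℕ} (hl : l.Perm (List.range' 1 n))
    (ha : a ∈ l) : 1 ≤ a ∧ a < n + 1 := by
  simpa [Nat.add_comm] using hl.subset ha

def oneLine {n : ℕ} (w : Equiv.Perm (Fin n)) : List ℕ :=
  List.ofFn fun i => (w i : ℕ) + 1

theorem oneLine_perm {n : ℕ} (w : Equiv.Perm (Fin n)) : (oneLine w).Perm (List.range' 1 n) := by
  have hrange : List.ofFn (fun i : Fin n => (i : ℕ) + 1) = List.range' 1 n := by
    apply List.ext_getElem <;> simp [Nat.add_comm]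
  rw [← hrange]
  exact w.ofFn_comp_perm (fun i => (i : ℕ) + 1)

theorem oneLine_injective {n : ℕ} : Function.Injective (oneLine (n := n)) := fun w w' h =>
  Equiv.ext fun i => Fin.ext <| by simpa using congrFun (List.ofFn_injective h) i

theorem exists_oneLine_eq {n : ℕ} {l : List ℕ} (hl : l.Perm (List.range' 1 n)) :
    ∃ w : Equiv.Perm (Fin n), oneLine w = l := by
  have hlen : l.length = n := by simpa using hl.length_eq
  have hbound (i : ℕ) (h : i < l.length) : 1 ≤ l[i] ∧ l[i] < n + 1 :=
    le_and_lt_of_mem_of_perm_range' hl (l.getElem_mem h)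
  let f : Fin n → Fin n := fun i =>
    ⟨l[i.1]'(by omega) - 1, by have := hbound i.1 (by omega); omega⟩
  have hf : Function.Injective f := fun i j hij => by
    have := hbound i.1 (by omega)
    have := hbound j.1 (by omega)
    exact Fin.ext <| (hl.nodup_iff.2 List.nodup_range').getElem_inj_iff.1 (by
      simp only [f, Fin.mk.injEq] at hij; omega)
  refine ⟨Equiv.ofBijective f (Finite.injective_iff_bijective.1 hf), ?_⟩
  apply List.ext_getElem (by simp [oneLine, hlen])
  intro i h _
  have := hbound i (by omega)
  simp [oneLine, f]
  omega

theorem pin_eq_pinnacles_oneLine {n : ℕ} (w : Equiv.Perm (Fin n)) :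
    Pin w = (oneLine w).pinnacles := by
  ext v
  simp only [Pin, IsPeak, List.mem_pinnacles_iff_getElem, oneLine, List.length_ofFn,
    List.getElem_ofFn, Set.mem_ofPred_eq]
  constructor
  · rintro ⟨⟨_ | j, hj⟩, ⟨hpos, h, hl, hr⟩, rfl⟩
    · exact absurd hpos (lt_irrefl 0)
    · exact ⟨j, h, by simpa using hl, by simpa using hr, rfl⟩
  · rintro ⟨j, h, hl, hr, rfl⟩
    exact ⟨⟨j + 1, by omega⟩, ⟨j.succ_pos, h, by simpa using hl, by simpa using hr⟩, rfl⟩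

def IsArrangement (n : ℕ) (S : Set ℕ) (l : List ℕ) : Prop :=
  l.Perm (List.range' 1 n) ∧ l.pinnacles = S

abbrev Arrangement (n : ℕ) (S : Set ℕ) : Type := Subtype (IsArrangement n S)

theorem pcount_eq_card_arrangement (n : ℕ) (S : Set ℕ) :
    pcount n S = Nat.card (Arrangement n S) := by
  refine Nat.card_eq_of_bijective
    (fun w => ⟨oneLine w.1, oneLine_perm w.1, pin_eq_pinnacles_oneLine w.1 ▸ w.2⟩)
    ⟨fun w w' h => Subtype.ext (oneLine_injective (congrArg Subtype.val h)), fun l => ?_⟩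
  obtain ⟨w, hw⟩ := exists_oneLine_eq l.2.1
  exact ⟨⟨w, by rw [pin_eq_pinnacles_oneLine, hw, l.2.2]⟩, Subtype.ext hw⟩

theorem Nat.card_eq_two_mul_of_bijective {α β : Type*} {f : Bool × α → β}
    (hf : Function.Bijective f) : Nat.card β = 2 * Nat.card α := by
  rw [← Nat.card_eq_of_bijective f hf, Nat.card_prod, Nat.card_eq_fintype_card, Fintype.card_bool]

theorem range'_one_succ_perm (n : ℕ) :
    (List.range' 1 (n + 1)).Perm ((n + 1) :: List.range' 1 n) := by
  rw [List.range'_concat, Nat.one_mul, Nat.add_comm]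
  exact List.perm_append_singleton _ _

theorem exists_eq_cond_cons_concat {n : ℕ} {m : List ℕ} (hm : m.Perm (List.range' 1 (n + 1)))
    (hn : n + 1 ∉ m.pinnacles) : ∃ b l, m = cond b ((n + 1) :: l) (l ++ [n + 1]) := by
  obtain ⟨s, t, rfl⟩ := List.append_of_mem (a := n + 1) (hm.mem_iff.2 (by simp [List.mem_range'_1]))
  have hperm : (s ++ t).Perm (List.range' 1 n) :=
    ((List.perm_middle.symm.trans hm).trans (range'_one_succ_perm n)).cons_inv
  have hlt (a : ℕ) (ha : a ∈ s ++ t) : a < n + 1 := (le_and_lt_of_mem_of_perm_range' hperm ha).2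
  rcases List.eq_nil_or_concat s with rfl | ⟨s, a, rfl⟩
  · exact ⟨true, t, rfl⟩
  cases t with
  | nil => exact ⟨false, s ++ [a], by simp⟩
  | cons c t =>
    exact absurd ⟨a, c, ⟨s, t, by simp⟩, hlt a (by simp), hlt c (by simp)⟩ hn

theorem isArrangement_succ_iff {n : ℕ} {S : Set ℕ} {l : List ℕ} (b : Bool) :
    IsArrangement (n + 1) S (cond b ((n + 1) :: l) (l ++ [n + 1])) ↔ IsArrangement n S l := by
  have hc : (cond b ((n + 1) :: l) (l ++ [n + 1])).Perm ((n + 1) :: l) := by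
    cases b
    · exact List.perm_append_singleton _ _
    · exact .refl _
  have hperm : (cond b ((n + 1) :: l) (l ++ [n + 1])).Perm (List.range' 1 (n + 1)) ↔
      l.Perm (List.range' 1 n) :=
    ⟨fun h => (List.perm_cons _).1 (hc.symm.trans (h.trans (range'_one_succ_perm n))),
      fun h => hc.trans (((List.perm_cons _).2 h).trans (range'_one_succ_perm n).symm)⟩
  have hpin (hl : l.Perm (List.range' 1 n)) :=
    List.pinnacles_cond_cons_concat (fun a ha => (le_and_lt_of_mem_of_perm_range' hl ha).2.le) b
  exact ⟨fun ⟨hp, hS⟩ => ⟨hperm.1 hp, (hpin (hperm.1 hp)).symm.trans hS⟩,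
    fun ⟨hp, hS⟩ => ⟨hperm.2 hp, (hpin hp).trans hS⟩⟩

theorem card_arrangement_succ {n : ℕ} {S : Set ℕ} (hn : n ≠ 0) (hS : n + 1 ∉ S) :
    Nat.card (Arrangement (n + 1) S) = 2 * Nat.card (Arrangement n S) := by
  refine Nat.card_eq_two_mul_of_bijective
    (f := fun p => ⟨cond p.1 ((n + 1) :: p.2.1) (p.2.1 ++ [n + 1]),
      (isArrangement_succ_iff p.1).2 p.2.2⟩) ⟨?_, fun m => ?_⟩
  · have hl (l : Arrangement n S) : l.1 ≠ [] ∧ n + 1 ∉ l.1 :=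
      ⟨fun h => hn (by simpa [h] using l.2.1.length_eq.symm),
        fun h => lt_irrefl _ (le_and_lt_of_mem_of_perm_range' l.2.1 h).2⟩
    rintro ⟨b, l⟩ ⟨b', l'⟩ h
    obtain ⟨rfl, he⟩ := List.cond_cons_concat_inj (hl l).1 (hl l').1 (hl l).2 (hl l').2
      (congrArg Subtype.val h)
    rw [Subtype.ext he]
  · obtain ⟨b, l, hm⟩ := exists_eq_cond_cons_concat m.2.1 fun h => hS (m.2.2 ▸ h)
    exact ⟨(b, ⟨l, (isArrangement_succ_iff b).1 (hm ▸ m.2)⟩), Subtype.ext hm.symm⟩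

def inflate (b : Bool) (l : List ℕ) : List ℕ :=
  l.flatMap fun a => if a = 1 then cond b [1, 3, 2] [2, 3, 1] else [a + 2]

def deflate (m : List ℕ) : List ℕ :=
  (m.filter (3 ≤ ·)).map (· - 2)

theorem inflate_of_one_notMem {b : Bool} {l : List ℕ} (h : 1 ∉ l) :
    inflate b l = l.map (· + 2) := by
  induction l with
  | nil => rfl
  | cons a l ih =>
    simp only [List.mem_cons, not_or] at h
    simp [inflate, Ne.symm h.1, ← ih h.2]

theorem inflate_append_one_cons (b : Bool) {p q : List ℕ} (h : 1 ∉ p ++ q) :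
    inflate b (p ++ 1 :: q) = p.map (· + 2) ++ cond b [1, 3, 2] [2, 3, 1] ++ q.map (· + 2) := by
  rw [List.mem_append, not_or] at h
  rw [← inflate_of_one_notMem (b := b) h.1, ← inflate_of_one_notMem (b := b) h.2]
  simp [inflate]

theorem deflate_inflate (b : Bool) {l : List ℕ} (h : ∀ a ∈ l, 1 ≤ a) :
    deflate (inflate b l) = l := by
  induction l with
  | nil => rfl
  | cons a l ih =>
    have ha := h a List.mem_cons_self
    have hl := ih fun a ha => h a (List.mem_cons_of_mem _ ha)
    simp only [deflate, inflate, List.flatMap_cons, List.filter_append, List.map_append] at hl ⊢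
    rw [hl]
    by_cases h1 : a = 1
    · subst h1; cases b <;> rfl
    · simp [h1, show 3 ≤ a + 2 by omega]

theorem exists_eq_append_one_cons {n : ℕ} {l : List ℕ} (hl : l.Perm (List.range' 1 (n + 1))) :
    ∃ p q, l = p ++ 1 :: q ∧ ∀ a ∈ p ++ q, 2 ≤ a := by
  obtain ⟨p, q, rfl⟩ := List.append_of_mem (a := 1) (hl.mem_iff.2 (by simp [List.mem_range'_1]))
  have hnd := hl.nodup_iff.2 List.nodup_range'
  rw [List.nodup_middle, List.nodup_cons] at hnd
  refine ⟨p, q, rfl, fun a ha => ?_⟩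
  have := (le_and_lt_of_mem_of_perm_range' hl
    (List.perm_middle.mem_iff.2 (List.mem_cons_of_mem _ ha))).1
  have : a ≠ 1 := fun h => hnd.1 (h ▸ ha)
  omega

theorem inflate_perm (b : Bool) {n : ℕ} {l : List ℕ} (hl : l.Perm (List.range' 1 (n + 1))) :
    (inflate b l).Perm (List.range' 1 (n + 3)) := by
  refine List.Perm.trans (l₂ := inflate b (List.range' 1 (n + 1))) (hl.flatMap_right _) ?_
  have hr : List.range' 1 (n + 1) = [] ++ 1 :: List.range' 2 n := by simp [List.range'_succ]
  rw [hr, inflate_append_one_cons b (by simp)]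
  have hmap : (List.range' 2 n).map (· + 2) = List.range' 4 n := by
    simpa [Nat.add_comm] using List.map_add_range' (a := 2) 2 n 1
  rw [hmap]
  have hr : List.range' 1 (n + 3) = [1, 2, 3] ++ List.range' 4 n := by simp [List.range'_succ]
  rw [hr]
  cases b
  · exact List.Perm.append_right _ (by decide)
  · exact List.Perm.append_right _ (by decide)

theorem deflate_perm {n : ℕ} {m : List ℕ} (hm : m.Perm (List.range' 1 (n + 3))) :
    (deflate m).Perm (List.range' 1 (n + 1)) := by
  refine ((hm.filter _).map _).trans (.of_eq ?_)
  have hr : List.range' 1 (n + 3) = [1, 2] ++ List.range' 3 (n + 1) := by simp [List.range'_succ]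
  have hf : (List.range' 3 (n + 1)).filter (3 ≤ ·) = List.range' 3 (n + 1) :=
    List.filter_eq_self.2 fun a ha => by simpa using (List.mem_range'_1.1 ha).1
  rw [hr, List.filter_append, hf]
  apply List.ext_getElem <;> simp
  omega

theorem pinnacles_inflate (b : Bool) {n : ℕ} {l : List ℕ} (hl : l.Perm (List.range' 1 (n + 1))) :
    (inflate b l).pinnacles = insert 3 ((· + 2) '' l.pinnacles) := by
  obtain ⟨p, q, rfl, h2⟩ := exists_eq_append_one_cons hl
  obtain ⟨x, y, hx, hy, hb⟩ : ∃ x y, x < 3 ∧ y < 3 ∧ cond b [1, 3, 2] [2, 3, 1] = [x, 3, y] := by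
    cases b
    exacts [⟨2, 1, by decide, by decide, rfl⟩, ⟨1, 2, by decide, by decide, rfl⟩]
  have h3 (a : ℕ) (ha : a ∈ p.map (· + 2) ++ q.map (· + 2)) : 3 < a := by
    rw [← List.map_append] at ha
    obtain ⟨c, hc, rfl⟩ := List.mem_map.1 ha
    have := h2 c hc
    omega
  have hmono : StrictMono (· + 2 : ℕ → ℕ) := fun _ _ h => Nat.add_lt_add_right h 2
  rw [inflate_append_one_cons b fun h => absurd (h2 1 h) (by decide), hb,
    show p.map (· + 2) ++ [x, 3, y] ++ q.map (· + 2) = p.map (· + 2) ++ x :: 3 :: y :: q.map (· + 2)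
      by simp,
    List.pinnacles_append_cons_cons_cons hx hy
      (fun a ha => h3 a (List.mem_append_left _ (List.mem_of_getLast? ha)))
      (fun c hc => h3 c (List.mem_append_right _ (List.mem_of_mem_head? hc))),
    ← List.pinnacles_map_of_strictMono hmono, List.map_append, List.map_cons]

theorem exists_eq_append_cons_three_cons {n : ℕ} {m : List ℕ}
    (hm : m.Perm (List.range' 1 (n + 3))) (h3 : 3 ∈ m.pinnacles) :
    ∃ s t x y, m = s ++ [x, 3, y] ++ t ∧ (x = 1 ∧ y = 2 ∨ x = 2 ∧ y = 1) ∧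
      ∀ a ∈ s ++ t, 4 ≤ a := by
  obtain ⟨x, y, ⟨s, t, rfl⟩, hx, hy⟩ := h3
  have hbd (a : ℕ) (ha : a ∈ s ++ [x, 3, y] ++ t) : 1 ≤ a :=
    (le_and_lt_of_mem_of_perm_range' hm ha).1
  have hx1 := hbd x (by simp)
  have hy1 := hbd y (by simp)
  have hnd := (List.perm_append_comm.append_right t).nodup_iff.1
    (hm.nodup_iff.2 List.nodup_range')
  simp only [List.cons_append, List.nil_append, List.nodup_cons,
    List.mem_cons, List.mem_append, not_or] at hnd
  have hxy : x ≠ y := by rintro rfl; simp_all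
  refine ⟨s, t, x, y, rfl, by omega, fun a ha => ?_⟩
  have := hbd a (by simp at ha ⊢; tauto)
  have : a ≠ x := fun h => by simp_all
  have : a ≠ y := fun h => by simp_all
  have : a ≠ 3 := fun h => by simp_all
  omega

theorem exists_inflate_deflate_eq {n : ℕ} {m : List ℕ} (hm : m.Perm (List.range' 1 (n + 3)))
    (h3 : 3 ∈ m.pinnacles) : ∃ b, inflate b (deflate m) = m := by
  obtain ⟨s, t, x, y, rfl, hxy, h4⟩ := exists_eq_append_cons_three_cons hm h3
  have hsub (u : List ℕ) (hu : ∀ a ∈ u, 4 ≤ a) : (u.map (· - 2)).map (· + 2) = u := by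
    rw [List.map_map]
    refine (List.map_congr_left fun a ha => ?_).trans (List.map_id u)
    have := hu a ha
    simp only [Function.comp_apply, id_eq]
    omega
  have h2 (a : ℕ) (ha : a ∈ s.map (· - 2) ++ t.map (· - 2)) : 2 ≤ a := by
    rw [← List.map_append] at ha
    obtain ⟨c, hc, rfl⟩ := List.mem_map.1 ha
    have := h4 c hc
    omega
  have e : inflate (decide (x = 1)) (s.map (· - 2) ++ 1 :: t.map (· - 2)) =
      s ++ [x, 3, y] ++ t := by
    rw [inflate_append_one_cons _ fun h => absurd (h2 1 h) (by decide),
      hsub s fun a ha => h4 a (List.mem_append_left _ ha),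
      hsub t fun a ha => h4 a (List.mem_append_right _ ha)]
    rcases hxy with ⟨rfl, rfl⟩ | ⟨rfl, rfl⟩ <;> rfl
  refine ⟨decide (x = 1), ?_⟩
  rw [← e, deflate_inflate]
  intro a ha
  rcases List.mem_cons.1 (List.perm_middle.mem_iff.1 ha) with rfl | ha
  · exact le_rfl
  · exact (h2 a ha).trans' (by decide)

theorem inflate_inj {n : ℕ} {l l' : List ℕ} {b b' : Bool} (hl : l.Perm (List.range' 1 (n + 1)))
    (hl' : l'.Perm (List.range' 1 (n + 1))) (h : inflate b l = inflate b' l') :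
    b = b' ∧ l = l' := by
  obtain rfl : l = l' := by
    rw [← deflate_inflate b fun a ha => (le_and_lt_of_mem_of_perm_range' hl ha).1, h,
      deflate_inflate b' fun a ha => (le_and_lt_of_mem_of_perm_range' hl' ha).1]
  refine ⟨?_, rfl⟩
  obtain ⟨p, q, rfl, h2⟩ := exists_eq_append_one_cons hl
  have h1 : 1 ∉ p ++ q := fun h => absurd (h2 1 h) (by decide)
  rw [inflate_append_one_cons b h1, inflate_append_one_cons b' h1] at h
  cases b <;> cases b' <;> simp_all

theorem eq_of_insert_three_image_add_two_eq {S T : Set ℕ} (hS : 1 ∉ S) (hT : 1 ∉ T)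
    (h : insert 3 ((· + 2) '' S) = insert 3 ((· + 2) '' T)) : S = T := by
  ext a
  have := congrArg (a + 2 ∈ ·) h
  by_cases ha : a = 1
  · simp [ha, hS, hT]
  · simpa [show a + 2 ≠ 3 by omega] using this

theorem one_notMem_pinnacles {n : ℕ} {l : List ℕ} (hl : l.Perm (List.range' 1 n)) :
    1 ∉ l.pinnacles := fun h => by
  obtain ⟨a, ha, hlt⟩ := List.exists_lt_of_mem_pinnacles h
  have := (le_and_lt_of_mem_of_perm_range' hl ha).1
  omega

theorem card_arrangement_insert_three {n : ℕ} {S : Set ℕ} (hS : 1 ∉ S) :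
    Nat.card (Arrangement (n + 3) (insert 3 ((· + 2) '' S))) =
      2 * Nat.card (Arrangement (n + 1) S) := by
  refine Nat.card_eq_two_mul_of_bijective (f := fun p => ⟨inflate p.1 p.2.1,
    inflate_perm p.1 p.2.2.1, by rw [pinnacles_inflate p.1 p.2.2.1, p.2.2.2]⟩) ⟨?_, fun m => ?_⟩
  · rintro ⟨b, l⟩ ⟨b', l'⟩ h
    obtain ⟨rfl, he⟩ := inflate_inj l.2.1 l'.2.1 (congrArg Subtype.val h)
    rw [Subtype.ext he]
  · obtain ⟨b, hb⟩ := exists_inflate_deflate_eq m.2.1 (by rw [m.2.2]; exact Set.mem_insert _ _)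
    have hl := deflate_perm m.2.1
    refine ⟨(b, ⟨deflate m.1, hl, eq_of_insert_three_image_add_two_eq
      (one_notMem_pinnacles hl) hS ?_⟩), Subtype.ext hb⟩
    rw [← pinnacles_inflate b hl, hb, m.2.2]

def minimalPinnacleSet (d : ℕ) : Set ℕ := {x | ∃ k, 1 ≤ k ∧ k ≤ d ∧ x = 2 * k + 1}

theorem le_and_le_of_mem_minimalPinnacleSet {d x : ℕ} (hx : x ∈ minimalPinnacleSet d) :
    3 ≤ x ∧ x ≤ 2 * d + 1 := by
  obtain ⟨k, hk1, hkd, rfl⟩ := hx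
  omega

theorem minimalPinnacleSet_zero : minimalPinnacleSet 0 = ∅ :=
  Set.eq_empty_of_forall_notMem fun _ hx => by
    have := le_and_le_of_mem_minimalPinnacleSet hx
    omega

theorem minimalPinnacleSet_succ (d : ℕ) :
    minimalPinnacleSet (d + 1) = insert 3 ((· + 2) '' minimalPinnacleSet d) := by
  ext x
  constructor
  · rintro ⟨_ | k, hk1, hkd, rfl⟩
    · omega
    · rcases k.eq_zero_or_pos with rfl | hk
      · exact Or.inl rfl
      · exact Or.inr ⟨2 * k + 1, ⟨k, hk, by omega, rfl⟩, by ring⟩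
  · rintro (rfl | ⟨_, ⟨k, hk1, hkd, rfl⟩, rfl⟩)
    · exact ⟨1, le_rfl, by omega, rfl⟩
    · exact ⟨k + 1, by omega, by omega, by ring⟩

theorem card_arrangement_minimalPinnacleSet (d : ℕ) :
    Nat.card (Arrangement (2 * d + 1) (minimalPinnacleSet d)) = 2 ^ d := by
  induction d with
  | zero =>
    rw [minimalPinnacleSet_zero]
    have : Unique (Arrangement 1 ∅) :=
      { default := ⟨[1], .refl _, List.pinnacles_eq_empty_of_length_lt (by simp)⟩
        uniq := fun l => Subtype.ext (List.perm_singleton.1 l.2.1) }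
    exact Nat.card_unique
  | succ d ih =>
    rw [minimalPinnacleSet_succ, show 2 * (d + 1) + 1 = 2 * d + 3 by ring,
      card_arrangement_insert_three fun h => by
        have := le_and_le_of_mem_minimalPinnacleSet h
        omega,
      ih, pow_succ, mul_comm]

theorem card_arrangement_minimalPinnacleSet_add (d m : ℕ) :
    Nat.card (Arrangement (2 * d + 1 + m) (minimalPinnacleSet d)) = 2 ^ m * 2 ^ d := by
  induction m with
  | zero => simpa using card_arrangement_minimalPinnacleSet d
  | succ m ih =>
    rw [← add_assoc, card_arrangement_succ (by omega)
      fun h => by have := le_and_le_of_mem_minimalPinnacleSet h; omega, ih, pow_succ]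
    ring

theorem pcount_minimal_set_general (d n : ℕ) (h : 2 * d < n) :
    pcount n {x : ℕ | ∃ k, 1 ≤ k ∧ k ≤ d ∧ x = 2 * k + 1} = 2 ^ (n - d - 1) := by
  obtain ⟨m, rfl⟩ : ∃ m, n = 2 * d + 1 + m := ⟨n - (2 * d + 1), by omega⟩
  change pcount _ (minimalPinnacleSet d) = _
  rw [pcount_eq_card_arrangement, card_arrangement_minimalPinnacleSet_add, ← pow_add]
  congr 1
  omega

theorem pcount_minimal_set (d n : ℕ) (hd : 0 < d) (h : 2 * d < n) :
    pcount n {x : ℕ | ∃ k, 1 ≤ k ∧ k ≤ d ∧ x = 2 * k + 1} = 2 ^ (n - d - 1) :=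
  pcount_minimal_set_general d n h
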